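/- Over F_2, x·F_{2^m - 1}(x)·F_{2^m + 1}(x) = x·(x^{2^m - 1} + 1)^2, i.e. the product x·F_{2^m-1}·F_{2^m+1} equals x^{2^{m+1}-1} + x. Consequently every irreducible polynomial over F_2 of degree dividing m divides either F_{2^m - 1}(x) or F_{2^m + 1}(x) or equals x. -/

import Mathlib

/-!
Cassini's identity `F_n F_{n+2} - F_{n+1}^2 = (-1)^{n+1}` and the doubling formula
`F_{2n} = x F_n^2` (both read in characteristic 2) give `F_{2^m} = x^{2^m - 1}` and then
`x F_{2^m - 1} F_{2^m + 1} = x (x^{2^{m+1} - 2} + 1) = x (x^{2^m - 1} + 1)^2`.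
This is a multiple of `x^{2^m} + x`, which every irreducible polynomial of degree dividing `m`
divides; a prime factor of the product divides one of its three factors.
-/

noncomputable def fibPoly (R : Type*) [CommRing R] : ℕ → Polynomial R
  | 0 => 0
  | 1 => 1
  | n + 2 => Polynomial.X * fibPoly R (n + 1) + fibPoly R n

open Polynomial

section CommRing

variable {R : Type*} [CommRing R]

@[simp]
lemma fibPoly_zero : fibPoly R 0 = 0 := rfl

@[simp]
lemma fibPoly_one : fibPoly R 1 = 1 := rfl

lemma fibPoly_add_two (n : ℕ) :
    fibPoly R (n + 2) = X * fibPoly R (n + 1) + fibPoly R n := rfl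

lemma fibPoly_add (m n : ℕ) :
    fibPoly R (m + n + 1) = fibPoly R m * fibPoly R n + fibPoly R (m + 1) * fibPoly R (n + 1) := by
  induction m using Nat.twoStepInduction with
  | zero => simp
  | one => rw [fibPoly_add_two, add_comm 1 n, fibPoly_add_two]; simp [add_comm]
  | more m ih₀ ih₁ =>
    have h₂ := fibPoly_add_two (R := R) m
    have h₃ := fibPoly_add_two (R := R) (m + 1)
    rw [show m + 2 + n + 1 = m + n + 1 + 2 by ring, fibPoly_add_two,
      show m + n + 1 + 1 = m + 1 + n + 1 by ring, ih₀, ih₁]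
    linear_combination (-fibPoly R n) * h₂ - fibPoly R (n + 1) * h₃

lemma fibPoly_mul_fibPoly_add_two_sub_sq (n : ℕ) :
    fibPoly R n * fibPoly R (n + 2) - fibPoly R (n + 1) ^ 2 = (-1) ^ (n + 1) := by
  induction n with
  | zero => simp
  | succ n ih =>
    have h₀ := fibPoly_add_two (R := R) n
    have h₁ := fibPoly_add_two (R := R) (n + 1)
    rw [pow_succ]
    linear_combination fibPoly R (n + 1) * h₁ - fibPoly R (n + 2) * h₀ - ih

end CommRing

section CharTwo

variable {R : Type*} [CommRing R] [CharP R 2]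

lemma fibPoly_mul_fibPoly_add_two_of_charTwo (n : ℕ) :
    fibPoly R n * fibPoly R (n + 2) = fibPoly R (n + 1) ^ 2 + 1 := by
  have h := fibPoly_mul_fibPoly_add_two_sub_sq (R := R) n
  rwa [CharTwo.neg_eq, one_pow, sub_eq_iff_eq_add'] at h

lemma fibPoly_two_mul_of_charTwo (n : ℕ) : fibPoly R (2 * n) = X * fibPoly R n ^ 2 := by
  cases n with
  | zero => simp
  | succ n =>
    rw [show 2 * (n + 1) = n + 1 + n + 1 by ring, fibPoly_add, fibPoly_add_two]
    linear_combination fibPoly R n * fibPoly R (n + 1) * CharTwo.two_eq_zero (R := R[X])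

lemma fibPoly_two_pow_of_charTwo (m : ℕ) : fibPoly R (2 ^ m) = X ^ (2 ^ m - 1) := by
  induction m with
  | zero => simp
  | succ m ih =>
    have := Nat.one_le_two_pow (n := m)
    rw [pow_succ', fibPoly_two_mul_of_charTwo, ih, ← pow_mul, ← pow_succ']
    congr 1
    omega

lemma X_mul_fibPoly_two_pow_sub_one_mul_fibPoly_two_pow_add_one (m : ℕ) :
    X * fibPoly R (2 ^ m - 1) * fibPoly R (2 ^ m + 1) = X * (X ^ (2 ^ m - 1) + 1) ^ 2 := by
  have hm : 2 ^ m - 1 + 1 = 2 ^ m := Nat.sub_add_cancel Nat.one_le_two_pow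
  rw [mul_assoc, show 2 ^ m + 1 = 2 ^ m - 1 + 2 by omega,
    fibPoly_mul_fibPoly_add_two_of_charTwo, hm, fibPoly_two_pow_of_charTwo, CharTwo.add_sq, one_pow]

lemma X_pow_two_pow_sub_X_dvd_X_mul_fibPoly_mul_fibPoly (m : ℕ) :
    X ^ 2 ^ m - X ∣ X * fibPoly R (2 ^ m - 1) * fibPoly R (2 ^ m + 1) := by
  have hm : 2 ^ m = 2 ^ m - 1 + 1 := (Nat.sub_add_cancel Nat.one_le_two_pow).symm
  rw [X_mul_fibPoly_two_pow_sub_one_mul_fibPoly_two_pow_add_one, CharTwo.sub_eq_add, hm, pow_succ',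
    ← mul_add_one]
  exact mul_dvd_mul_left X (dvd_pow_self _ two_ne_zero)

end CharTwo

lemma eq_X_of_irreducible_of_dvd_X {p : (ZMod 2)[X]} (hp : Irreducible p) (hdvd : p ∣ X) :
    p = X := by
  have hmonic : p.Monic := by
    have : ∀ a : ZMod 2, a ≠ 0 → a = 1 := by decide
    exact this _ (leadingCoeff_ne_zero.mpr hp.ne_zero)
  exact eq_of_monic_of_associated hmonic monic_X (hp.associated_of_dvd irreducible_X hdvd)

theorem fibPoly_completeness (m : ℕ) :
    (Polynomial.X * fibPoly (ZMod 2) (2 ^ m - 1) * fibPoly (ZMod 2) (2 ^ m + 1) =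
        Polynomial.X * (Polynomial.X ^ (2 ^ m - 1) + 1) ^ 2) ∧
      ∀ p : Polynomial (ZMod 2), Irreducible p → p.natDegree ∣ m →
        p ∣ fibPoly (ZMod 2) (2 ^ m - 1) ∨ p ∣ fibPoly (ZMod 2) (2 ^ m + 1) ∨
          p = Polynomial.X := by
  refine ⟨X_mul_fibPoly_two_pow_sub_one_mul_fibPoly_two_pow_add_one m, fun p hp hdeg => ?_⟩
  have hsplit : p ∣ X ^ 2 ^ m - X := by
    simpa [Nat.card_zmod] using hp.natDegree_dvd_iff_dvd_X_pow_card_pow_sub_X.mp hdeg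
  rcases hp.prime.dvd_mul.mp (hsplit.trans (X_pow_two_pow_sub_X_dvd_X_mul_fibPoly_mul_fibPoly m))
    with h | hplus
  · rcases hp.prime.dvd_mul.mp h with hX | hminus
    · exact Or.inr (Or.inr (eq_X_of_irreducible_of_dvd_X hp hX))
    · exact Or.inl hminus
  · exact Or.inr (Or.inl hplus)
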